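/- arXiv:1308.3035 — 11 statements merged into one kernel-verified Lean document; each statement's English description precedes it below -/
import Mathlib

section
/- Stäckel's theorem (sufficiency, first integrals in involution): Let n ≥ 1, let Ω ⊆ ℝⁿ be open, and let g : Ω → ℝⁿ and V : Ω → ℝ be given, defining the natural Hamiltonian H(x,p) = (1/2)·Σ_{j=1}^{n} g_j(x)·p_j² + V(x) on Ω × ℝⁿ. Suppose there are continuously differentiable functions U_{jk} : ℝ → ℝ and w_j : ℝ → ℝ (1 ≤ j,k ≤ n), each depending only on the single variable x_j, such that for every x ∈ Ω the matrix 𝖴(x) = (U_{jk}(x_j)) is invertible, Σ_{j=1}^n g_j(x) U_{jk}(x_j) = δ_{1k} for every k, and Σ_{j=1}^n g_j(x) w_j(x_j) = V(x). Define K_k(x,p) = Σ_{j=1}^n (𝖴(x)^{-1})_{kj} · ((1/2)p_j² + w_j(x_j)) for k = 1,…,n. Then K₁ = H on Ω × ℝⁿ, and the functions K₁,…,K_n are pairwise in involution: for all k, l and all (x,p) ∈ Ω × ℝⁿ, the canonical Poisson bracket {K_k, K_l}(x,p) = Σ_{j=1}^n (∂K_k/∂p_j · ∂K_l/∂x_j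 − ∂K_k/∂x_j · ∂K_l/∂p_j) vanishes; in particular each K_k is a first integral of H. -/
/-!
Stäckel's theorem (sufficiency, first integrals in involution).
-/

open Finset Matrix

private lemma diffAt_det {n : ℕ} {M : ℝ → Matrix (Fin n) (Fin n) ℝ} {s₀ : ℝ}
    (h : ∀ i l, DifferentiableAt ℝ (fun s => M s i l) s₀) :
    DifferentiableAt ℝ (fun s => (M s).det) s₀ := by
  simp only [Matrix.det_apply']
  exact DifferentiableAt.fun_sum fun σ _ =>
    (DifferentiableAt.fun_finsetProd fun i _ => h (σ i) i).const_mul _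

private lemma diffAt_inv_entry {n : ℕ} {M : ℝ → Matrix (Fin n) (Fin n) ℝ} {s₀ : ℝ}
    (h : ∀ i l, DifferentiableAt ℝ (fun s => M s i l) s₀)
    (hdet : (M s₀).det ≠ 0) (k m : Fin n) :
    DifferentiableAt ℝ (fun s => (M s)⁻¹ k m) s₀ := by
  classical
  have heq : (fun s => (M s)⁻¹ k m)
      = fun s => ((M s).det)⁻¹ * ((M s).updateRow m (Pi.single k 1)).det := by
    funext s
    rw [Matrix.inv_def, Matrix.smul_apply, Ring.inverse_eq_inv, Matrix.adjugate_apply,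
      smul_eq_mul]
  rw [heq]
  refine ((diffAt_det h).inv hdet).mul (diffAt_det fun i l => ?_)
  have : (fun s => ((M s).updateRow m (Pi.single k 1)) i l)
      = fun s => if i = m then (Pi.single k 1 : Fin n → ℝ) l else M s i l := by
    funext s; rw [Matrix.updateRow_apply]
  rw [this]
  by_cases him : i = m
  · simpa [him] using differentiableAt_const _
  · simpa [him] using h i l

theorem stackel_sufficiency
    (n : ℕ) (hn : 0 < n)
    (Ω : Set (Fin n → ℝ)) (hΩ : IsOpen Ω)
    (g : (Fin n → ℝ) → Fin n → ℝ) (V : (Fin n → ℝ) → ℝ)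
    -- the Stäckel matrix entries and vector entries, each a C¹ function of a single variable
    (U : Fin n → Fin n → ℝ → ℝ) (w : Fin n → ℝ → ℝ)
    (hU : ∀ j k, ContDiff ℝ 1 (U j k)) (hw : ∀ j, ContDiff ℝ 1 (w j))
    -- invertibility of the Stäckel matrix at each point of Ω
    (hinv : ∀ x ∈ Ω, IsUnit (Matrix.of fun i l : Fin n => U i l (x i)))
    -- the two Stäckel conditions
    (hrow : ∀ x ∈ Ω, ∀ k : Fin n,
      ∑ j, g x j * U j k (x j) = if k = (⟨0, hn⟩ : Fin n) then 1 else 0)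
    (hpot : ∀ x ∈ Ω, ∑ j, g x j * w j (x j) = V x)
    -- the Hamiltonian
    (H : (Fin n → ℝ) → (Fin n → ℝ) → ℝ)
    (hH : ∀ x p, H x p = (1/2) * ∑ j, g x j * (p j)^2 + V x)
    -- the functions K_k built from the inverse Stäckel matrix
    (K : Fin n → (Fin n → ℝ) → (Fin n → ℝ) → ℝ)
    (hK : ∀ k x p, K k x p =
      ∑ j, (Matrix.of fun i l : Fin n => U i l (x i))⁻¹ k j
        * ((1/2) * (p j)^2 + w j (x j))) :
    -- K₁ = H on Ω × ℝⁿ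
    (∀ x ∈ Ω, ∀ p : Fin n → ℝ, K ⟨0, hn⟩ x p = H x p) ∧
    -- the K_k are pairwise in involution on Ω × ℝⁿ
    (∀ k l : Fin n, ∀ x ∈ Ω, ∀ p : Fin n → ℝ,
      ∑ j, (deriv (fun s => K k x (Function.update p j s)) (p j)
              * deriv (fun s => K l (Function.update x j s) p) (x j)
            - deriv (fun s => K k (Function.update x j s) p) (x j)
              * deriv (fun s => K l x (Function.update p j s)) (p j)) = 0) := by
  classical
  -- the first row of the inverse Stäckel matrix is `g`
  have key1 : ∀ x ∈ Ω, ∀ jj : Fin n,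
      g x jj = (Matrix.of fun i l : Fin n => U i l (x i))⁻¹ (⟨0, hn⟩ : Fin n) jj := by
    intro x hx jj
    set A : Matrix (Fin n) (Fin n) ℝ := Matrix.of fun i l : Fin n => U i l (x i) with hAdef
    have hA : IsUnit A.det := (Matrix.isUnit_iff_isUnit_det A).mp (hinv x hx)
    have h1 : Matrix.vecMul (g x) A = Pi.single (⟨0, hn⟩ : Fin n) 1 := by
      funext kk
      have h0 := hrow x hx kk
      simp only [Matrix.vecMul, dotProduct, Pi.single_apply, hAdef, Matrix.of_apply]
      exact h0
    have h2 : g x = Matrix.vecMul (Pi.single (⟨0, hn⟩ : Fin n) 1) A⁻¹ := by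
      have h3 : Matrix.vecMul (Matrix.vecMul (g x) A) A⁻¹
          = Matrix.vecMul (Pi.single (⟨0, hn⟩ : Fin n) 1) A⁻¹ := by rw [h1]
      rwa [Matrix.vecMul_vecMul, Matrix.mul_nonsing_inv A hA, Matrix.vecMul_one] at h3
    rw [h2, Matrix.single_one_vecMul]; rfl
  constructor
  · -- K₁ = H
    intro x hx p
    rw [hK, hH, ← hpot x hx, Finset.mul_sum, ← Finset.sum_add_distrib]
    refine Finset.sum_congr rfl fun j _ => ?_
    rw [← key1 x hx j]
    ring
  · -- involution
    intro k l x hx p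
    set A₀ : Matrix (Fin n) (Fin n) ℝ := Matrix.of fun i t : Fin n => U i t (x i) with hA₀def
    have hA₀u : IsUnit A₀.det := (Matrix.isUnit_iff_isUnit_det _).mp (hinv x hx)
    -- derivatives in the momenta
    have hpder : ∀ (m j : Fin n), HasDerivAt (fun s => K m x (Function.update p j s))
        (A₀⁻¹ m j * p j) (p j) := by
      intro m j
      have hfun : (fun s => K m x (Function.update p j s))
          = fun s => ∑ t, A₀⁻¹ m t * ((1/2) * ((if t = j then s else p t))^2 + w t (x t)) := by
        funext s
        rw [hK]
        exact Finset.sum_congr rfl fun t _ => by rw [Function.update_apply]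
      rw [hfun]
      have h1 : ∀ t : Fin n, HasDerivAt
          (fun s => A₀⁻¹ m t * ((1/2) * ((if t = j then s else p t))^2 + w t (x t)))
          (if t = j then A₀⁻¹ m j * p j else 0) (p j) := by
        intro t
        by_cases ht : t = j
        · subst ht
          simp only [eq_self_iff_true, if_true]
          have h3 := ((hasDerivAt_pow 2 (p t)).const_mul (A₀⁻¹ m t * (1/2))).add_const
            (A₀⁻¹ m t * w t (x t))
          have hfg : (fun s : ℝ => A₀⁻¹ m t * (1/2) * s ^ 2 + A₀⁻¹ m t * w t (x t))
              = fun s : ℝ => A₀⁻¹ m t * ((1/2) * s ^ 2 + w t (x t)) := by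
            funext s; ring
          have hval : A₀⁻¹ m t * (1/2) * (((2 : ℕ) : ℝ) * p t ^ (2 - 1)) = A₀⁻¹ m t * p t := by
            push_cast; ring
          rw [hfg, hval] at h3
          exact h3
        · simp only [if_neg ht]
          exact hasDerivAt_const _ _
      have h2 := HasDerivAt.fun_sum (fun t (_ : t ∈ Finset.univ) => h1 t)
      simpa [Finset.sum_ite_eq'] using h2
    -- derivatives in the positions
    have hxder : ∀ j : Fin n, ∃ c : ℝ, ∀ m : Fin n,
        deriv (fun s => K m (Function.update x j s) p) (x j) = A₀⁻¹ m j * c := by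
      intro j
      set A : ℝ → Matrix (Fin n) (Fin n) ℝ :=
        fun s => Matrix.of fun i t : Fin n => U i t (Function.update x j s i) with hAdef
      have hinvfun_eq : ∀ m s, K m (Function.update x j s) p
          = ∑ t, (A s)⁻¹ m t * ((1/2) * (p t)^2 + w t (Function.update x j s t)) := by
        intro m s
        rw [hAdef]
        exact hK m _ p
      have hAx : A (x j) = A₀ := by
        have hux : Function.update x j (x j) = x := Function.update_eq_self j x
        simp only [hAdef, hA₀def, hux]
      -- entrywise derivatives of A
      have hent : ∀ i t : Fin n, HasDerivAt (fun s => A s i t)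
          (if i = j then deriv (U j t) (x j) else 0) (x j) := by
        intro i t
        have heq : (fun s => A s i t) = fun s => U i t (if i = j then s else x i) := by
          funext s
          rw [hAdef]
          simp [Function.update_apply]
        rw [heq]
        by_cases hij : i = j
        · subst hij
          simp only [eq_self_iff_true, if_true]
          exact (((hU i t).differentiable one_ne_zero) (x i)).hasDerivAt
        · simp only [if_neg hij]
          exact hasDerivAt_const _ _
      have hentd : ∀ i t : Fin n, DifferentiableAt ℝ (fun s => A s i t) (x j) :=
        fun i t => (hent i t).differentiableAt
      have hdet0 : (A (x j)).det ≠ 0 := by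
        rw [hAx]
        exact hA₀u.ne_zero
      have hev : ∀ᶠ s in nhds (x j), (A s).det ≠ 0 :=
        (diffAt_det hentd).continuousAt.eventually_ne hdet0
      -- differentiability of the K's in the j-th position variable
      have hKdiff : ∀ m : Fin n,
          DifferentiableAt ℝ (fun s => K m (Function.update x j s) p) (x j) := by
        intro m
        have heq : (fun s => K m (Function.update x j s) p)
            = fun s => ∑ t, (A s)⁻¹ m t * ((1/2) * (p t)^2 + w t (if t = j then s else x t)) := by
          funext s
          rw [hinvfun_eq m s]
          exact Finset.sum_congr rfl fun t _ => by rw [Function.update_apply]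
        rw [heq]
        refine DifferentiableAt.fun_sum fun t _ =>
          (diffAt_inv_entry hentd hdet0 m t).mul ?_
        by_cases ht : t = j
        · subst ht
          simp only [eq_self_iff_true, if_true]
          exact (differentiableAt_const _).add (((hw t).differentiable one_ne_zero) (x t))
        · simp only [if_neg ht]
          exact differentiableAt_const _
      set d : Fin n → ℝ := fun m => deriv (fun s => K m (Function.update x j s) p) (x j) with hd
      set c : ℝ := deriv (w j) (x j) - ∑ t, deriv (U j t) (x j) * K t x p with hc
      -- the implicit identity, in a neighbourhood of x j
      have hid : ∀ i : Fin n, (fun s => ∑ m, A s i m * K m (Function.update x j s) p)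
          =ᶠ[nhds (x j)] fun s => (1/2) * (p i)^2 + w i (Function.update x j s i) := by
        intro i
        filter_upwards [hev] with s hs
        have hu : IsUnit (A s).det := isUnit_iff_ne_zero.mpr hs
        calc ∑ m, A s i m * K m (Function.update x j s) p
            = ∑ m, ∑ t, A s i m
                * ((A s)⁻¹ m t * ((1/2) * (p t)^2 + w t (Function.update x j s t))) := by
              refine Finset.sum_congr rfl fun m _ => ?_
              rw [hinvfun_eq m s, Finset.mul_sum]
          _ = ∑ t, (∑ m, A s i m * (A s)⁻¹ m t)
                * ((1/2) * (p t)^2 + w t (Function.update x j s t)) := by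
              rw [Finset.sum_comm]
              refine Finset.sum_congr rfl fun t _ => ?_
              rw [Finset.sum_mul]
              exact Finset.sum_congr rfl fun m _ => (mul_assoc _ _ _).symm
          _ = ∑ t, (1 : Matrix (Fin n) (Fin n) ℝ) i t
                * ((1/2) * (p t)^2 + w t (Function.update x j s t)) := by
              refine Finset.sum_congr rfl fun t _ => ?_
              congr 1
              rw [← Matrix.mul_apply, Matrix.mul_nonsing_inv _ hu]
          _ = (1/2) * (p i)^2 + w i (Function.update x j s i) := by
              simp [Matrix.one_apply, ite_mul, Finset.sum_ite_eq]
      -- derivative of the left-hand side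
      have hLder : ∀ i : Fin n,
          HasDerivAt (fun s => ∑ m, A s i m * K m (Function.update x j s) p)
            (∑ m, ((if i = j then deriv (U j m) (x j) else 0) * K m x p + A₀ i m * d m))
            (x j) := by
        intro i
        refine HasDerivAt.fun_sum fun m _ => ?_
        have h1 := (hent i m).fun_mul ((hKdiff m).hasDerivAt)
        simpa [hAx, Function.update_eq_self] using h1
      -- derivative of the right-hand side
      have hRder : ∀ i : Fin n,
          HasDerivAt (fun s => (1/2) * (p i)^2 + w i (Function.update x j s i))
            (if i = j then deriv (w j) (x j) else 0) (x j) := by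
        intro i
        have heq : (fun s => (1/2) * (p i)^2 + w i (Function.update x j s i))
            = fun s => (1/2) * (p i)^2 + w i (if i = j then s else x i) := by
          funext s; rw [Function.update_apply]
        rw [heq]
        by_cases hij : i = j
        · subst hij
          simp only [eq_self_iff_true, if_true]
          simpa using (hasDerivAt_const (x i) ((1/2 : ℝ) * p i ^ 2)).fun_add
            (((hw i).differentiable one_ne_zero) (x i)).hasDerivAt
        · simp only [if_neg hij]
          exact hasDerivAt_const _ _
      have hDeq : ∀ i : Fin n,
          (∑ m, ((if i = j then deriv (U j m) (x j) else 0) * K m x p + A₀ i m * d m))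
            = (if i = j then deriv (w j) (x j) else 0) := fun i =>
        ((hLder i).congr_of_eventuallyEq (hid i).symm).unique (hRder i)
      have hmv : ∀ i : Fin n, ∑ m, A₀ i m * d m = (if i = j then c else 0) := by
        intro i
        have h := hDeq i
        rw [Finset.sum_add_distrib] at h
        by_cases hij : i = j
        · subst hij
          simp only [eq_self_iff_true, if_true] at h ⊢
          rw [hc]
          linarith
        · simp only [if_neg hij, zero_mul] at h ⊢
          simpa using h
      refine ⟨c, fun m => ?_⟩
      have hvec : A₀ *ᵥ d = fun i => if i = j then c else 0 := by
        funext i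
        simpa [Matrix.mulVec, dotProduct] using hmv i
      have hds : d = A₀⁻¹ *ᵥ fun i => if i = j then c else 0 := by
        rw [← hvec, Matrix.mulVec_mulVec, Matrix.nonsing_inv_mul _ hA₀u, Matrix.one_mulVec]
      have hdm : d m = A₀⁻¹ m j * c := by
        rw [hds]
        simp [Matrix.mulVec, dotProduct, mul_ite, Finset.sum_ite_eq']
      exact hdm
    refine Finset.sum_eq_zero fun j _ => ?_
    obtain ⟨c, hcall⟩ := hxder j
    rw [hcall k, hcall l, (hpder k j).deriv, (hpder l j).deriv]
    ring
end

section
/- Separability criterion for the axially symmetric harmonic trap in parabolic coordinates: let ω_ρ ≥ 0 and ω_z ≥ 0 and define V(ρ,z) = (1/2)(ω_ρ²·ρ² + ω_z²·z²). Then there exist functions f, g : ℝ → ℝ such that for all ξ, η ∈ ℝ, (ξ² + η²)·V(ξη, (ξ² − η²)/2) = f(ξ) + g(η), if and only if ω_z = 2ω_ρ. (Explicitly, (ξ²+η²)·V(ξη,(ξ²−η²)/2) = (1/2)(ω_z/2)²(ξ⁶+η⁶) + (1/2)[ω_ρ² − (ω_z/2)²](ξ⁴η² + ξ²η⁴), and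 the cross term vanishes exactly when ω_z = 2ω_ρ.) -/
/-!
Separability criterion for the axially symmetric harmonic trap in
(semi)parabolic coordinates `x = ξη cos φ`, `y = ξη sin φ`, `z = (ξ² − η²)/2`,
so that the cylindrical radius is `ρ = ξη`.  The potential
`V(ρ,z) = (1/2)(ω_ρ² ρ² + ω_z² z²)` is separable, i.e.
`(ξ² + η²) · V(ξη, (ξ²−η²)/2)` splits as `f(ξ) + g(η)`,
if and only if `ω_z = 2 ω_ρ`.
-/

theorem harmonic_trap_parabolic_separability
    (ωρ ωz : ℝ) (hρ : 0 ≤ ωρ) (hz : 0 ≤ ωz)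
    (V : ℝ → ℝ → ℝ)
    (hV : ∀ ρ z, V ρ z = (1/2) * (ωρ^2 * ρ^2 + ωz^2 * z^2)) :
    (∃ f g : ℝ → ℝ, ∀ ξ η : ℝ,
        (ξ^2 + η^2) * V (ξ * η) ((ξ^2 - η^2) / 2) = f ξ + g η)
      ↔ ωz = 2 * ωρ := by
  constructor
  · rintro ⟨f, g, h⟩
    have h11 := h 1 1
    have h00 := h 0 0
    have h10 := h 1 0
    have h01 := h 0 1
    simp only [hV] at h11 h00 h10 h01
    have key : ωρ^2 = (ωz/2)^2 := by nlinarith [h11, h00, h10, h01]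
    have : ωρ = ωz / 2 := by
      nlinarith [sq_nonneg (ωρ - ωz/2), sq_nonneg (ωρ + ωz/2)]
    linarith
  · intro hzρ
    refine ⟨fun ξ => (1/2) * ωρ^2 * ξ^6, fun η => (1/2) * ωρ^2 * η^6, fun ξ η => ?_⟩
    rw [hV, hzρ]
    ring
end

section
/- Conservation of the generalized Runge–Lenz scalar for the Kepler problem perturbed by a 2:1 axially symmetric oscillator: let a ∈ ℝ and ω ∈ ℝ, and let q = (x, y, z) : ℝ → ℝ³ be twice differentiable with q(t) ≠ 0 for all t, satisfying q̈(t) = −a·q(t)/|q(t)|³ − ω²·(x(t), y(t), 0) − 4ω²·(0, 0, z(t)) for all t (the equations of motion for the potential W(q) = −a/|q| + (1/2)ω²(x²+y²) + 2ω²z²). Then the function K_z(t) = (q̇(t) × (q(t) × q̇(t)))·e₃ − a·z(t)/|q(t)| − ω²·(x(t)² + y(t)²)·z(t) is constant in time. -/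
/-!
Conservation of the generalized Runge–Lenz scalar for the Kepler problem
perturbed by a 2:1 axially symmetric oscillator.

The curve `q = (x, y, z) : ℝ → ℝ³` is given componentwise; `x'`, `x''` etc.
are its first and second derivatives (so `q` is twice differentiable).
With `r = √(x² + y² + z²)`, the equations of motion are
`q̈ = −a q / r³ − ω² (x, y, 0) − 4ω² (0, 0, z)`.
The `z`-component of the Runge–Lenz combination `q̇ × (q × q̇)` is
`z (ẋ² + ẏ²) − ż (x ẋ + y ẏ)`, and the conserved scalar is
`K_z = (q̇ × (q × q̇))·e₃ − a z / r − ω² (x² + y²) z`.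
-/

theorem runge_lenz_kepler_two_one_oscillator
    (a ω : ℝ)
    (x y z x' y' z' x'' y'' z'' : ℝ → ℝ)
    (hx : ∀ t, HasDerivAt x (x' t) t) (hx' : ∀ t, HasDerivAt x' (x'' t) t)
    (hy : ∀ t, HasDerivAt y (y' t) t) (hy' : ∀ t, HasDerivAt y' (y'' t) t)
    (hz : ∀ t, HasDerivAt z (z' t) t) (hz' : ∀ t, HasDerivAt z' (z'' t) t)
    (hne : ∀ t, x t ^ 2 + y t ^ 2 + z t ^ 2 ≠ 0)
    (heqx : ∀ t, x'' t = -a * x t / Real.sqrt (x t ^ 2 + y t ^ 2 + z t ^ 2) ^ 3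
                          - ω ^ 2 * x t)
    (heqy : ∀ t, y'' t = -a * y t / Real.sqrt (x t ^ 2 + y t ^ 2 + z t ^ 2) ^ 3
                          - ω ^ 2 * y t)
    (heqz : ∀ t, z'' t = -a * z t / Real.sqrt (x t ^ 2 + y t ^ 2 + z t ^ 2) ^ 3
                          - 4 * ω ^ 2 * z t)
    (K : ℝ → ℝ)
    (hK : ∀ t, K t = z t * (x' t ^ 2 + y' t ^ 2) - z' t * (x t * x' t + y t * y' t)
                      - a * z t / Real.sqrt (x t ^ 2 + y t ^ 2 + z t ^ 2)
                      - ω ^ 2 * (x t ^ 2 + y t ^ 2) * z t) :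
    ∀ s t : ℝ, K s = K t := by
  have key : ∀ t, HasDerivAt K 0 t := by
    intro t
    have hEq : K = fun t => z t * (x' t ^ 2 + y' t ^ 2) - z' t * (x t * x' t + y t * y' t)
                      - a * z t / Real.sqrt (x t ^ 2 + y t ^ 2 + z t ^ 2)
                      - ω ^ 2 * (x t ^ 2 + y t ^ 2) * z t := funext hK
    rw [hEq]
    have hsum_pos : 0 < x t ^ 2 + y t ^ 2 + z t ^ 2 :=
      lt_of_le_of_ne (by positivity) (Ne.symm (hne t))
    have hr_pos : 0 < Real.sqrt (x t ^ 2 + y t ^ 2 + z t ^ 2) := Real.sqrt_pos.mpr hsum_pos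
    have hr_sq : Real.sqrt (x t ^ 2 + y t ^ 2 + z t ^ 2) ^ 2 = x t ^ 2 + y t ^ 2 + z t ^ 2 :=
      Real.sq_sqrt hsum_pos.le
    have hq : HasDerivAt (fun t => x t ^ 2 + y t ^ 2 + z t ^ 2)
        (2 * x t ^ 1 * x' t + 2 * y t ^ 1 * y' t + 2 * z t ^ 1 * z' t) t :=
      (((hx t).pow 2).add ((hy t).pow 2)).add ((hz t).pow 2)
    have hrD : HasDerivAt (fun t => Real.sqrt (x t ^ 2 + y t ^ 2 + z t ^ 2))
        ((2 * x t ^ 1 * x' t + 2 * y t ^ 1 * y' t + 2 * z t ^ 1 * z' t)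
          / (2 * Real.sqrt (x t ^ 2 + y t ^ 2 + z t ^ 2))) t := hq.sqrt (hne t)
    have h1 := (hz t).mul (((hx' t).pow 2).add ((hy' t).pow 2))
    have h2 := (hz' t).mul (((hx t).mul (hx' t)).add ((hy t).mul (hy' t)))
    have h3 := ((hasDerivAt_const t a).mul (hz t)).div hrD hr_pos.ne'
    have h4 := ((hasDerivAt_const t (ω ^ 2)).mul (((hx t).pow 2).add ((hy t).pow 2))).mul (hz t)
    have full := ((h1.sub h2).sub h3).sub h4
    refine full.congr_deriv ?_
    symm
    simp only [Pi.add_apply, Pi.mul_apply, Pi.pow_apply]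
    rw [heqx t, heqy t, heqz t]
    have h3 : Real.sqrt (x t ^ 2 + y t ^ 2 + z t ^ 2) ^ 3
        = Real.sqrt (x t ^ 2 + y t ^ 2 + z t ^ 2) * (x t ^ 2 + y t ^ 2 + z t ^ 2) := by
      rw [pow_succ, hr_sq]; ring
    rw [h3]
    field_simp
    simp only [Nat.cast_ofNat, Nat.add_one_sub_one, pow_one, h3, hr_sq]
    ring
  intro s t
  exact is_const_of_deriv_eq_zero (fun u => (key u).differentiableAt)
    (fun u => (key u).deriv) s t
end

section
/- Conservation of the complementary Runge–Lenz scalar in the planar τ = 1/2 case: let a ∈ ℝ and ω ∈ ℝ, and let ρ, z : ℝ → ℝ be twice differentiable with (ρ(t), z(t)) ≠ (0,0) for all t, satisfying ρ̈ = −ω²ρ − a·ρ/(ρ² + z²)^{3/2} and z̈ = −(ω²/4)·z − a·z/(ρ² + z²)^{3/2}. Then the function K_ρ⁰(t) = ρ·ż² − ρ̇·z·ż − a·ρ/√(ρ² + z²) − (1/4)·ω²·ρ·z² is constant in time. -/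
/-!
Conservation of the complementary Runge–Lenz scalar in the planar τ = 1/2 case:
the planar (L_z = 0) Kepler problem of strength `a` perturbed by an anisotropic
oscillator with planar frequency `ω` and vertical frequency `ω/2`, in Cartesian
coordinates `(ρ, z)` of the vertical plane.  The conserved quantity is
`K_ρ⁰ = ρ ż² − ρ̇ z ż − a ρ / √(ρ² + z²) − (1/4) ω² ρ z²`.
-/

theorem runge_lenz_planar_tau_half
    (a ω : ℝ)
    (ρ z ρ' z' ρ'' z'' : ℝ → ℝ)
    (hρ : ∀ t, HasDerivAt ρ (ρ' t) t) (hρ' : ∀ t, HasDerivAt ρ' (ρ'' t) t)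
    (hz : ∀ t, HasDerivAt z (z' t) t) (hz' : ∀ t, HasDerivAt z' (z'' t) t)
    (hne : ∀ t, (ρ t, z t) ≠ (0, 0))
    (heqρ : ∀ t, ρ'' t = -ω ^ 2 * ρ t
                          - a * ρ t / (ρ t ^ 2 + z t ^ 2) ^ ((3 : ℝ) / 2))
    (heqz : ∀ t, z'' t = -(ω ^ 2 / 4) * z t
                          - a * z t / (ρ t ^ 2 + z t ^ 2) ^ ((3 : ℝ) / 2))
    (K : ℝ → ℝ)
    (hK : ∀ t, K t = ρ t * z' t ^ 2 - ρ' t * z t * z' t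
                      - a * ρ t / Real.sqrt (ρ t ^ 2 + z t ^ 2)
                      - (1 / 4) * ω ^ 2 * ρ t * z t ^ 2) :
    ∀ s t : ℝ, K s = K t := by
  have hKfun : K = fun t => ρ t * z' t ^ 2 - ρ' t * z t * z' t
                      - a * ρ t / Real.sqrt (ρ t ^ 2 + z t ^ 2)
                      - (1 / 4) * ω ^ 2 * ρ t * z t ^ 2 := funext hK
  have key : ∀ t, HasDerivAt K 0 t := by
    intro t
    have hq : 0 < ρ t ^ 2 + z t ^ 2 := by
      have h : ρ t ≠ 0 ∨ z t ≠ 0 := by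
        by_contra h
        push_neg at h
        exact hne t (by simp [h.1, h.2])
      rcases h with h | h
      · positivity
      · positivity
    have hR : 0 < Real.sqrt (ρ t ^ 2 + z t ^ 2) := Real.sqrt_pos.mpr hq
    have hR2 : Real.sqrt (ρ t ^ 2 + z t ^ 2) ^ 2 = ρ t ^ 2 + z t ^ 2 :=
      Real.sq_sqrt hq.le
    have h32 : (ρ t ^ 2 + z t ^ 2) ^ ((3 : ℝ) / 2)
        = Real.sqrt (ρ t ^ 2 + z t ^ 2) ^ 3 := by
      rw [Real.sqrt_eq_rpow, ← Real.rpow_natCast ((ρ t ^ 2 + z t ^ 2) ^ ((1:ℝ)/2)) 3,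
        ← Real.rpow_mul hq.le]
      norm_num
    have hA : HasDerivAt (fun t => ρ t * z' t ^ 2)
        (ρ' t * z' t ^ 2 + ρ t * (2 * z' t ^ 1 * z'' t)) t :=
      (hρ t).mul ((hz' t).pow 2)
    have hB : HasDerivAt (fun t => ρ' t * z t * z' t)
        ((ρ'' t * z t + ρ' t * z' t) * z' t + ρ' t * z t * z'' t) t :=
      ((hρ' t).mul (hz t)).mul (hz' t)
    have hS : HasDerivAt (fun t => Real.sqrt (ρ t ^ 2 + z t ^ 2))
        ((2 * ρ t ^ 1 * ρ' t + 2 * z t ^ 1 * z' t) /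
          (2 * Real.sqrt (ρ t ^ 2 + z t ^ 2))) t :=
      (((hρ t).pow 2).add ((hz t).pow 2)).sqrt hq.ne'
    have hC : HasDerivAt (fun t => a * ρ t / Real.sqrt (ρ t ^ 2 + z t ^ 2))
        ((a * ρ' t * Real.sqrt (ρ t ^ 2 + z t ^ 2)
          - a * ρ t * ((2 * ρ t ^ 1 * ρ' t + 2 * z t ^ 1 * z' t) /
            (2 * Real.sqrt (ρ t ^ 2 + z t ^ 2)))) /
          Real.sqrt (ρ t ^ 2 + z t ^ 2) ^ 2) t :=
      ((hρ t).const_mul a).div hS hR.ne'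
    have hD : HasDerivAt (fun t => (1 / 4) * ω ^ 2 * ρ t * z t ^ 2)
        ((1 / 4) * ω ^ 2 * (ρ' t * z t ^ 2 + ρ t * (2 * z t ^ 1 * z' t))) t := by
      have h := ((hρ t).mul ((hz t).pow 2)).const_mul ((1 / 4) * ω ^ 2)
      have he : (fun t => (1 / 4) * ω ^ 2 * ρ t * z t ^ 2)
          = fun t => (1 / 4) * ω ^ 2 * (ρ t * z t ^ 2) := by
        funext x; ring
      rw [he]
      exact h
    rw [hKfun]
    have H := ((hA.sub hB).sub hC).sub hD
    convert H using 1
    case e'_4 => rfl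
    case e'_5 => rfl
    case e'_8 => rfl
    rw [heqρ t, heqz t, h32]
    set R := Real.sqrt (ρ t ^ 2 + z t ^ 2) with hRdef
    field_simp
    linear_combination (4 * a * ρ' t) * hR2
  have hdiff : Differentiable ℝ K := fun t => (key t).differentiableAt
  have hderiv : ∀ t, deriv K t = 0 := fun t => (key t).deriv
  intro s t
  exact is_const_of_deriv_eq_zero hdiff hderiv s t
end

section
/- Conservation of the quartic invariant of Blümel et al. for τ = 1/2 in three dimensions: let a ∈ ℝ, ω ∈ ℝ, ℓ ∈ ℝ, and let ρ, z : ℝ → ℝ be twice differentiable with ρ(t) > 0 for all t, satisfying the reduced cylindrical equations of motion ρ̈ − ℓ²/ρ³ = −ω²ρ − a·ρ/(ρ² + z²)^{3/2} and z̈ = −(ω²/4)·z − a·z/(ρ² + z²)^{3/2}. Define K_ρ⁰ = ρ·ż² − ρ̇·z·ż − a·ρ/√(ρ² + z²) − (1/4)ω²·ρ·z² and K_φ⁰ = −ℓ·(ρ·ρ̇ + z·ż)/ρ. Then the quartic function K⁽⁴⁾(t) = (K_ρ⁰ + ℓ²/ρ)² + (K_φ⁰)² + ω²·(ρ² + z²)·ℓ²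 is constant in time. -/
/-!
Conservation of the quartic invariant of Blümel et al. for τ = 1/2 in three
dimensions.  In cylindrical coordinates `(ρ, φ, z)` with conserved angular
momentum `L_z = ρ² φ̇ = ℓ`, the reduced equations of motion of the Kepler
problem of strength `a` perturbed by an axially symmetric oscillator with
planar frequency `ω` and vertical frequency `ω/2` are
`ρ̈ − ℓ²/ρ³ = −ω² ρ − a ρ/(ρ²+z²)^{3/2}` and
`z̈ = −(ω²/4) z − a z/(ρ²+z²)^{3/2}`.
With `K_ρ⁰ = ρ ż² − ρ̇ z ż − a ρ/√(ρ²+z²) − (1/4) ω² ρ z²` and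
`K_φ⁰ = −ℓ (ρ ρ̇ + z ż)/ρ`, the quartic quantity
`K⁽⁴⁾ = (K_ρ⁰ + ℓ²/ρ)² + (K_φ⁰)² + ω² (ρ² + z²) ℓ²` is a constant of motion.
-/

set_option maxHeartbeats 2000000 in
theorem quartic_invariant_tau_half
    (a ω ℓ : ℝ)
    (ρ z ρ' z' ρ'' z'' : ℝ → ℝ)
    (hρ : ∀ t, HasDerivAt ρ (ρ' t) t) (hρ' : ∀ t, HasDerivAt ρ' (ρ'' t) t)
    (hz : ∀ t, HasDerivAt z (z' t) t) (hz' : ∀ t, HasDerivAt z' (z'' t) t)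
    (hpos : ∀ t, 0 < ρ t)
    (heqρ : ∀ t, ρ'' t - ℓ ^ 2 / ρ t ^ 3
        = -ω ^ 2 * ρ t - a * ρ t / (ρ t ^ 2 + z t ^ 2) ^ ((3 : ℝ) / 2))
    (heqz : ∀ t, z'' t
        = -(ω ^ 2 / 4) * z t - a * z t / (ρ t ^ 2 + z t ^ 2) ^ ((3 : ℝ) / 2))
    (Kρ Kφ K4 : ℝ → ℝ)
    (hKρ : ∀ t, Kρ t = ρ t * z' t ^ 2 - ρ' t * z t * z' t
                        - a * ρ t / Real.sqrt (ρ t ^ 2 + z t ^ 2)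
                        - (1 / 4) * ω ^ 2 * ρ t * z t ^ 2)
    (hKφ : ∀ t, Kφ t = -ℓ * (ρ t * ρ' t + z t * z' t) / ρ t)
    (hK4 : ∀ t, K4 t = (Kρ t + ℓ ^ 2 / ρ t) ^ 2 + (Kφ t) ^ 2
                        + ω ^ 2 * (ρ t ^ 2 + z t ^ 2) * ℓ ^ 2) :
    ∀ s t : ℝ, K4 s = K4 t := by
  have hK4fun : K4 = fun s =>
      (ρ s * z' s ^ 2 - ρ' s * z s * z' s - a * ρ s / Real.sqrt (ρ s ^ 2 + z s ^ 2)
        - 1 / 4 * ω ^ 2 * (ρ s * z s ^ 2) + ℓ ^ 2 / ρ s) ^ 2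
      + (-ℓ * (ρ s * ρ' s + z s * z' s) / ρ s) ^ 2
      + ω ^ 2 * (ρ s ^ 2 + z s ^ 2) * ℓ ^ 2 := by
    funext s
    rw [hK4 s, hKρ s, hKφ s]
    ring
  have key : ∀ t, HasDerivAt K4 0 t := by
    intro t
    have hρ0 : ρ t ≠ 0 := ne_of_gt (hpos t)
    have hS : (0 : ℝ) < ρ t ^ 2 + z t ^ 2 := by nlinarith [hpos t, sq_nonneg (z t)]
    have hc : (0 : ℝ) < Real.sqrt (ρ t ^ 2 + z t ^ 2) := Real.sqrt_pos.mpr hS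
    have hc0 : Real.sqrt (ρ t ^ 2 + z t ^ 2) ≠ 0 := ne_of_gt hc
    have hc2 : Real.sqrt (ρ t ^ 2 + z t ^ 2) ^ 2 = ρ t ^ 2 + z t ^ 2 := Real.sq_sqrt hS.le
    -- derivative of ρ²+z²
    have hSd : HasDerivAt (fun s => ρ s ^ 2 + z s ^ 2)
        (2 * ρ t * ρ' t + 2 * z t * z' t) t := by
      have h := ((hρ t).pow 2).add ((hz t).pow 2)
      refine h.congr_deriv ?_
      push_cast
      ring
    -- derivative of sqrt(ρ²+z²)
    have hcd : HasDerivAt (fun s => Real.sqrt (ρ s ^ 2 + z s ^ 2))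
        ((ρ t * ρ' t + z t * z' t) / Real.sqrt (ρ t ^ 2 + z t ^ 2)) t := by
      have h := hSd.sqrt hS.ne'
      refine h.congr_deriv ?_
      field_simp
    -- derivative of a ρ / sqrt(ρ²+z²), written without c²
    have t3 : HasDerivAt (fun s => a * ρ s / Real.sqrt (ρ s ^ 2 + z s ^ 2))
        (a * ρ' t / Real.sqrt (ρ t ^ 2 + z t ^ 2)
          - a * ρ t * (ρ t * ρ' t + z t * z' t)
              / (Real.sqrt (ρ t ^ 2 + z t ^ 2) * (ρ t ^ 2 + z t ^ 2))) t := by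
      have h := ((hρ t).const_mul a).div hcd hc0
      refine h.congr_deriv ?_
      field_simp
      rw [hc2]
    -- rpow to sqrt
    have h32 : (ρ t ^ 2 + z t ^ 2) ^ ((3 : ℝ) / 2)
        = (ρ t ^ 2 + z t ^ 2) * Real.sqrt (ρ t ^ 2 + z t ^ 2) := by
      rw [show (3 : ℝ) / 2 = 1 + 1 / 2 by norm_num, Real.rpow_add hS, Real.rpow_one,
        ← Real.sqrt_eq_rpow]
    -- equations of motion in sqrt form
    have heqρu : ρ'' t = ℓ ^ 2 / ρ t ^ 3 - ω ^ 2 * ρ t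
        - a * ρ t / (Real.sqrt (ρ t ^ 2 + z t ^ 2) * (ρ t ^ 2 + z t ^ 2)) := by
      have h := heqρ t
      rw [h32] at h
      field_simp at h ⊢
      linarith
    have heqzu : z'' t = -(ω ^ 2 / 4) * z t
        - a * z t / (Real.sqrt (ρ t ^ 2 + z t ^ 2) * (ρ t ^ 2 + z t ^ 2)) := by
      have h := heqz t
      rw [h32] at h
      rw [h]
      ring_nf
    -- assemble the big derivative
    have hA : HasDerivAt (fun s => ρ s * z' s ^ 2 - ρ' s * z s * z' s
        - a * ρ s / Real.sqrt (ρ s ^ 2 + z s ^ 2)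
        - 1 / 4 * ω ^ 2 * (ρ s * z s ^ 2) + ℓ ^ 2 / ρ s)
        (ρ' t * z' t ^ 2 + ρ t * (2 * z' t * z'' t)
          - (ρ'' t * z t * z' t + ρ' t * z' t * z' t + ρ' t * z t * z'' t)
          - (a * ρ' t / Real.sqrt (ρ t ^ 2 + z t ^ 2)
              - a * ρ t * (ρ t * ρ' t + z t * z' t)
                  / (Real.sqrt (ρ t ^ 2 + z t ^ 2) * (ρ t ^ 2 + z t ^ 2)))
          - 1 / 4 * ω ^ 2 * (ρ' t * z t ^ 2 + ρ t * (2 * z t * z' t))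
          - ℓ ^ 2 * ρ' t / ρ t ^ 2) t := by
      have h1 := (hρ t).mul ((hz' t).pow 2)
      have h2 := ((hρ' t).mul (hz t)).mul (hz' t)
      have h4 := (((hρ t).mul ((hz t).pow 2))).const_mul (1 / 4 * ω ^ 2)
      have h5 := (hasDerivAt_const t (ℓ ^ 2)).div (hρ t) hρ0
      have h := ((((h1.sub h2).sub t3).sub h4).add h5)
      refine h.congr_deriv ?_
      push_cast
      simp only [Pi.pow_apply, Pi.mul_apply]
      field_simp
      ring
    have hP : HasDerivAt (fun s => ρ s * ρ' s + z s * z' s)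
        (ρ' t * ρ' t + ρ t * ρ'' t + (z' t * z' t + z t * z'' t)) t :=
      ((hρ t).mul (hρ' t)).add ((hz t).mul (hz' t))
    have hB : HasDerivAt (fun s => -ℓ * (ρ s * ρ' s + z s * z' s) / ρ s)
        ((-ℓ * (ρ' t * ρ' t + ρ t * ρ'' t + (z' t * z' t + z t * z'' t)) * ρ t
          - -ℓ * (ρ t * ρ' t + z t * z' t) * ρ' t) / ρ t ^ 2) t :=
      (hP.const_mul (-ℓ)).div (hρ t) hρ0
    have hC : HasDerivAt (fun s => ω ^ 2 * (ρ s ^ 2 + z s ^ 2) * ℓ ^ 2)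
        (ω ^ 2 * (2 * ρ t * ρ' t + 2 * z t * z' t) * ℓ ^ 2) t := by
      have h := hSd.const_mul (ω ^ 2)
      exact (hSd.const_mul (ω ^ 2)).mul_const (ℓ ^ 2)
    have htot := ((hA.pow 2).add (hB.pow 2)).add hC
    rw [hK4fun]
    refine htot.congr_deriv ?_
    rw [heqρu, heqzu]
    push_cast
    field_simp
    ring
  intro s t
  exact is_const_of_deriv_eq_zero (fun x => (key x).differentiableAt)
    (fun x => (key x).deriv) s t
end

section
/- Redmond's invariant for the Kepler problem in a uniform field (Stark effect): let a ∈ ℝ and E ∈ ℝ, and let q = (x, y, z) : ℝ → ℝ³ be twice differentiable with q(t) ≠ 0 for all t, satisfying q̈(t) = −a·q(t)/|q(t)|³ − E·e₃ (the equations of motion for the potential −a/|q| + E·z). Then the function K(t) = (q̇(t) × (q(t) × q̇(t)))·e₃ − a·z(t)/|q(t)| − (E/2)·(x(t)² + y(t)²) is constant in time. -/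
/-!
Redmond's invariant for the Kepler problem in a uniform field (Stark effect).
The curve `q = (x, y, z)` satisfies `q̈ = −a q/|q|³ − E e₃`, the equations of
motion for the potential `−a/|q| + E z`.  The `z`-component of the Runge–Lenz
combination `q̇ × (q × q̇)` is `z (ẋ² + ẏ²) − ż (x ẋ + y ẏ)`, and
`K = (q̇ × (q × q̇))·e₃ − a z/|q| − (E/2)(x² + y²)` is conserved.
-/

set_option maxHeartbeats 1000000 in
theorem redmond_invariant_stark
    (a E : ℝ)
    (x y z x' y' z' x'' y'' z'' : ℝ → ℝ)
    (hx : ∀ t, HasDerivAt x (x' t) t) (hx' : ∀ t, HasDerivAt x' (x'' t) t)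
    (hy : ∀ t, HasDerivAt y (y' t) t) (hy' : ∀ t, HasDerivAt y' (y'' t) t)
    (hz : ∀ t, HasDerivAt z (z' t) t) (hz' : ∀ t, HasDerivAt z' (z'' t) t)
    (hne : ∀ t, x t ^ 2 + y t ^ 2 + z t ^ 2 ≠ 0)
    (heqx : ∀ t, x'' t = -a * x t / Real.sqrt (x t ^ 2 + y t ^ 2 + z t ^ 2) ^ 3)
    (heqy : ∀ t, y'' t = -a * y t / Real.sqrt (x t ^ 2 + y t ^ 2 + z t ^ 2) ^ 3)
    (heqz : ∀ t, z'' t = -a * z t / Real.sqrt (x t ^ 2 + y t ^ 2 + z t ^ 2) ^ 3 - E)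
    (K : ℝ → ℝ)
    (hK : ∀ t, K t = z t * (x' t ^ 2 + y' t ^ 2) - z' t * (x t * x' t + y t * y' t)
                      - a * z t / Real.sqrt (x t ^ 2 + y t ^ 2 + z t ^ 2)
                      - (E / 2) * (x t ^ 2 + y t ^ 2)) :
    ∀ s t : ℝ, K s = K t := by
  have hKd : ∀ t : ℝ, HasDerivAt K 0 t := by
    intro t
    have hu' : HasDerivAt (fun s => x s ^ 2 + y s ^ 2 + z s ^ 2)
        (2 * x t * x' t + 2 * y t * y' t + 2 * z t * z' t) t := by
      have := (((hx t).pow 2).add ((hy t).pow 2)).add ((hz t).pow 2)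
      exact this.congr_deriv (by simp only [Pi.add_apply, Pi.sub_apply, Pi.mul_apply, Pi.pow_apply, Nat.cast_ofNat, Nat.reduceSub, pow_one])
    have hut : x t ^ 2 + y t ^ 2 + z t ^ 2 ≠ 0 := hne t
    have hupos : 0 < x t ^ 2 + y t ^ 2 + z t ^ 2 := by
      have : 0 ≤ x t ^ 2 + y t ^ 2 + z t ^ 2 := by positivity
      exact lt_of_le_of_ne this (Ne.symm hut)
    have hRpos : 0 < Real.sqrt (x t ^ 2 + y t ^ 2 + z t ^ 2) := Real.sqrt_pos.mpr hupos
    have hRne : Real.sqrt (x t ^ 2 + y t ^ 2 + z t ^ 2) ≠ 0 := ne_of_gt hRpos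
    have hR2 : Real.sqrt (x t ^ 2 + y t ^ 2 + z t ^ 2) ^ 2 = x t ^ 2 + y t ^ 2 + z t ^ 2 :=
      Real.sq_sqrt hupos.le
    have hr : HasDerivAt (fun s => Real.sqrt (x s ^ 2 + y s ^ 2 + z s ^ 2))
        ((2 * x t * x' t + 2 * y t * y' t + 2 * z t * z' t)
          / (2 * Real.sqrt (x t ^ 2 + y t ^ 2 + z t ^ 2))) t :=
      hu'.sqrt hut
    have hbig : HasDerivAt (fun s =>
        z s * (x' s ^ 2 + y' s ^ 2) - z' s * (x s * x' s + y s * y' s)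
          - a * z s / Real.sqrt (x s ^ 2 + y s ^ 2 + z s ^ 2)
          - (E / 2) * (x s ^ 2 + y s ^ 2))
        ((z' t * (x' t ^ 2 + y' t ^ 2)
            + z t * (2 * x' t * x'' t + 2 * y' t * y'' t))
          - (z'' t * (x t * x' t + y t * y' t)
            + z' t * (x' t * x' t + x t * x'' t + y' t * y' t + y t * y'' t))
          - ((a * z' t) * Real.sqrt (x t ^ 2 + y t ^ 2 + z t ^ 2)
              - (a * z t) * ((2 * x t * x' t + 2 * y t * y' t + 2 * z t * z' t)
                / (2 * Real.sqrt (x t ^ 2 + y t ^ 2 + z t ^ 2))))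
            / Real.sqrt (x t ^ 2 + y t ^ 2 + z t ^ 2) ^ 2
          - (E / 2) * (2 * x t * x' t + 2 * y t * y' t)) t := by
      have h1 := (hz t).mul (((hx' t).pow 2).add ((hy' t).pow 2))
      have h2 := (hz' t).mul (((hx t).mul (hx' t)).add ((hy t).mul (hy' t)))
      have h3 := (((hz t).const_mul a).div hr hRne)
      have h4 := (((hx t).pow 2).add ((hy t).pow 2)).const_mul (E / 2)
      have := ((h1.sub h2).sub h3).sub h4
      exact this.congr_deriv (by simp only [Pi.add_apply, Pi.sub_apply, Pi.mul_apply, Pi.pow_apply, Nat.cast_ofNat, Nat.reduceSub, pow_one]; ring)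
    have hKeq : K = fun s =>
        z s * (x' s ^ 2 + y' s ^ 2) - z' s * (x s * x' s + y s * y' s)
          - a * z s / Real.sqrt (x s ^ 2 + y s ^ 2 + z s ^ 2)
          - (E / 2) * (x s ^ 2 + y s ^ 2) := funext hK
    rw [hKeq]
    convert hbig using 1
    rw [heqx t, heqy t, heqz t]
    show (0 : ℝ) = _
    generalize hg : Real.sqrt (x t ^ 2 + y t ^ 2 + z t ^ 2) = R at hR2 hRne ⊢
    have hinv : R * R⁻¹ = 1 := mul_inv_cancel₀ hRne
    linear_combination (a * z' t / R ^ 3) * hR2 - (a * z' t * R * R⁻¹ ^ 2) * hinv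
  intro s t
  exact is_const_of_deriv_eq_zero (fun u => (hKd u).differentiableAt)
    (fun u => (hKd u).deriv) s t
end

section
/- Conserved modified angular momentum for the Kepler–Hartmann system: let α ∈ ℝ and b ∈ ℝ, and let q = (x, y, z) : ℝ → ℝ³ be twice differentiable with x(t)² + y(t)² > 0 for all t, satisfying q̈ = −α·q/|q|³ + 2b·(x, y, 0)/(x² + y²)² (the equations of motion for the potential −α/|q| + b/(x² + y²)). Then the function ℒ²(t) = (1/2)·|q(t) × q̇(t)|² + b·|q(t)|²/(x(t)² + y(t)²) is constant in time. -/
/-!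
Conserved modified angular momentum for the Kepler–Hartmann system.
The curve `q = (x, y, z)` satisfies
`q̈ = −α q/|q|³ + 2b (x, y, 0)/(x² + y²)²`,
the equations of motion for the potential `−α/|q| + b/(x² + y²)`.
With angular momentum `L = q × q̇`, i.e.
`L₁ = y ż − z ẏ`, `L₂ = z ẋ − x ż`, `L₃ = x ẏ − y ẋ`,
the modified quantity `ℒ² = (1/2)|L|² + b |q|²/(x² + y²)` is conserved.
-/

theorem modified_angular_momentum_kepler_hartmann
    (α b : ℝ)
    (x y z x' y' z' x'' y'' z'' : ℝ → ℝ)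
    (hx : ∀ t, HasDerivAt x (x' t) t) (hx' : ∀ t, HasDerivAt x' (x'' t) t)
    (hy : ∀ t, HasDerivAt y (y' t) t) (hy' : ∀ t, HasDerivAt y' (y'' t) t)
    (hz : ∀ t, HasDerivAt z (z' t) t) (hz' : ∀ t, HasDerivAt z' (z'' t) t)
    (hρ : ∀ t, 0 < x t ^ 2 + y t ^ 2)
    (heqx : ∀ t, x'' t = -α * x t / Real.sqrt (x t ^ 2 + y t ^ 2 + z t ^ 2) ^ 3
                          + 2 * b * x t / (x t ^ 2 + y t ^ 2) ^ 2)
    (heqy : ∀ t, y'' t = -α * y t / Real.sqrt (x t ^ 2 + y t ^ 2 + z t ^ 2) ^ 3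
                          + 2 * b * y t / (x t ^ 2 + y t ^ 2) ^ 2)
    (heqz : ∀ t, z'' t = -α * z t / Real.sqrt (x t ^ 2 + y t ^ 2 + z t ^ 2) ^ 3)
    (L2 : ℝ → ℝ)
    (hL2 : ∀ t, L2 t = (1 / 2) * ((y t * z' t - z t * y' t) ^ 2
                                  + (z t * x' t - x t * z' t) ^ 2
                                  + (x t * y' t - y t * x' t) ^ 2)
                        + b * (x t ^ 2 + y t ^ 2 + z t ^ 2) / (x t ^ 2 + y t ^ 2)) :
    ∀ s t : ℝ, L2 s = L2 t := by
  have hfun : L2 = fun t => (1 / 2) * ((y t * z' t - z t * y' t) ^ 2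
                                  + (z t * x' t - x t * z' t) ^ 2
                                  + (x t * y' t - y t * x' t) ^ 2)
                        + b * (x t ^ 2 + y t ^ 2 + z t ^ 2) / (x t ^ 2 + y t ^ 2) :=
    funext hL2
  have key : ∀ t, HasDerivAt L2 0 t := by
    intro t
    have hA : HasDerivAt (fun t => y t * z' t - z t * y' t)
        (y' t * z' t + y t * z'' t - (z' t * y' t + z t * y'' t)) t :=
      ((hy t).mul (hz' t)).sub ((hz t).mul (hy' t))
    have hB : HasDerivAt (fun t => z t * x' t - x t * z' t)
        (z' t * x' t + z t * x'' t - (x' t * z' t + x t * z'' t)) t :=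
      ((hz t).mul (hx' t)).sub ((hx t).mul (hz' t))
    have hC : HasDerivAt (fun t => x t * y' t - y t * x' t)
        (x' t * y' t + x t * y'' t - (y' t * x' t + y t * x'' t)) t :=
      ((hx t).mul (hy' t)).sub ((hy t).mul (hx' t))
    have hsq : HasDerivAt (fun t => (1 / 2) * ((y t * z' t - z t * y' t) ^ 2
        + (z t * x' t - x t * z' t) ^ 2 + (x t * y' t - y t * x' t) ^ 2))
        ((1 / 2) * ((2 * (y t * z' t - z t * y' t) ^ 1 *
              (y' t * z' t + y t * z'' t - (z' t * y' t + z t * y'' t)))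
          + (2 * (z t * x' t - x t * z' t) ^ 1 *
              (z' t * x' t + z t * x'' t - (x' t * z' t + x t * z'' t)))
          + (2 * (x t * y' t - y t * x' t) ^ 1 *
              (x' t * y' t + x t * y'' t - (y' t * x' t + y t * x'' t))))) t :=
      (((hA.pow 2).add (hB.pow 2)).add (hC.pow 2)).const_mul (1 / 2)
    have hnum : HasDerivAt (fun t => b * (x t ^ 2 + y t ^ 2 + z t ^ 2))
        (b * ((2 * x t ^ 1 * x' t + 2 * y t ^ 1 * y' t) + 2 * z t ^ 1 * z' t)) t :=
      ((((hx t).pow 2).add ((hy t).pow 2)).add ((hz t).pow 2)).const_mul b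
    have hden : HasDerivAt (fun t => x t ^ 2 + y t ^ 2)
        (2 * x t ^ 1 * x' t + 2 * y t ^ 1 * y' t) t :=
      ((hx t).pow 2).add ((hy t).pow 2)
    have hdiv := hnum.div hden (hρ t).ne'
    have hbig := hsq.add hdiv
    simp only [Pi.add_def, Pi.div_def] at hbig
    rw [← hfun] at hbig
    convert hbig using 1
    case e'_4 => rfl
    case e'_5 => rfl
    have hr := (hρ t).ne'
    rw [heqx, heqy, heqz]
    field_simp
    ring
  intro s t
  exact is_const_of_deriv_eq_zero (fun u => (key u).differentiableAt)
    (fun u => (key u).deriv) s t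
end

section
/- Conserved Runge–Lenz-type scalar for the Kepler–Hartmann system: let α ∈ ℝ and b ∈ ℝ, and let q = (x, y, z) : ℝ → ℝ³ be twice differentiable with x(t)² + y(t)² > 0 for all t, satisfying q̈ = −α·q/|q|³ + 2b·(x, y, 0)/(x² + y²)² (the equations of motion for the potential −α/|q| + b/(x² + y²)). Then the function K_z(t) = (q̇ × (q × q̇))·e₃ − α·z/|q| + 2b·z/(x² + y²) is constant in time. -/
/-!
Conserved Runge–Lenz-type scalar for the Kepler–Hartmann system.
The curve `q = (x, y, z)` satisfies
`q̈ = −α q/|q|³ + 2b (x, y, 0)/(x² + y²)²`,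
the equations of motion for the potential `−α/|q| + b/(x² + y²)`.
The `z`-component of `q̇ × (q × q̇)` is `z (ẋ² + ẏ²) − ż (x ẋ + y ẏ)`, and
`K_z = (q̇ × (q × q̇))·e₃ − α z/|q| + 2b z/(x² + y²)` is conserved.
-/

set_option maxHeartbeats 1000000 in
theorem runge_lenz_kepler_hartmann
    (α b : ℝ)
    (x y z x' y' z' x'' y'' z'' : ℝ → ℝ)
    (hx : ∀ t, HasDerivAt x (x' t) t) (hx' : ∀ t, HasDerivAt x' (x'' t) t)
    (hy : ∀ t, HasDerivAt y (y' t) t) (hy' : ∀ t, HasDerivAt y' (y'' t) t)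
    (hz : ∀ t, HasDerivAt z (z' t) t) (hz' : ∀ t, HasDerivAt z' (z'' t) t)
    (hρ : ∀ t, 0 < x t ^ 2 + y t ^ 2)
    (heqx : ∀ t, x'' t = -α * x t / Real.sqrt (x t ^ 2 + y t ^ 2 + z t ^ 2) ^ 3
                          + 2 * b * x t / (x t ^ 2 + y t ^ 2) ^ 2)
    (heqy : ∀ t, y'' t = -α * y t / Real.sqrt (x t ^ 2 + y t ^ 2 + z t ^ 2) ^ 3
                          + 2 * b * y t / (x t ^ 2 + y t ^ 2) ^ 2)
    (heqz : ∀ t, z'' t = -α * z t / Real.sqrt (x t ^ 2 + y t ^ 2 + z t ^ 2) ^ 3)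
    (K : ℝ → ℝ)
    (hK : ∀ t, K t = z t * (x' t ^ 2 + y' t ^ 2) - z' t * (x t * x' t + y t * y' t)
                      - α * z t / Real.sqrt (x t ^ 2 + y t ^ 2 + z t ^ 2)
                      + 2 * b * z t / (x t ^ 2 + y t ^ 2)) :
    ∀ s t : ℝ, K s = K t := by
  have hKfun : K = fun t => z t * (x' t ^ 2 + y' t ^ 2) - z' t * (x t * x' t + y t * y' t)
      - α * z t / Real.sqrt (x t ^ 2 + y t ^ 2 + z t ^ 2)
      + 2 * b * z t / (x t ^ 2 + y t ^ 2) := funext hK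
  have hderiv : ∀ t, HasDerivAt K 0 t := by
    intro t
    have hupos : 0 < x t ^ 2 + y t ^ 2 + z t ^ 2 := by nlinarith [hρ t, sq_nonneg (z t)]
    set R := Real.sqrt (x t ^ 2 + y t ^ 2 + z t ^ 2) with hR
    have hRpos : 0 < R := Real.sqrt_pos.mpr hupos
    have hR2 : R ^ 2 = x t ^ 2 + y t ^ 2 + z t ^ 2 := Real.sq_sqrt hupos.le
    have hρne : x t ^ 2 + y t ^ 2 ≠ 0 := (hρ t).ne'
    have hu : HasDerivAt (fun t => x t ^ 2 + y t ^ 2 + z t ^ 2)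
        (2 * x t * x' t + 2 * y t * y' t + 2 * z t * z' t) t := by
      have := (((hx t).pow 2).add ((hy t).pow 2)).add ((hz t).pow 2)
      refine this.congr_deriv ?_; ring
    have hsqrt : HasDerivAt (fun t => Real.sqrt (x t ^ 2 + y t ^ 2 + z t ^ 2))
        ((2 * x t * x' t + 2 * y t * y' t + 2 * z t * z' t) / (2 * R)) t :=
      hu.sqrt hupos.ne'
    have hρ' : HasDerivAt (fun t => x t ^ 2 + y t ^ 2)
        (2 * x t * x' t + 2 * y t * y' t) t := by
      have := ((hx t).pow 2).add ((hy t).pow 2)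
      refine this.congr_deriv ?_; ring
    have h1 : HasDerivAt (fun t => z t * (x' t ^ 2 + y' t ^ 2))
        (z' t * (x' t ^ 2 + y' t ^ 2) + z t * (2 * x' t * x'' t + 2 * y' t * y'' t)) t := by
      have := (hz t).mul (((hx' t).pow 2).add ((hy' t).pow 2))
      refine this.congr_deriv ?_; simp only [Pi.add_apply, Pi.mul_apply, Pi.pow_apply]; ring
    have h2 : HasDerivAt (fun t => z' t * (x t * x' t + y t * y' t))
        (z'' t * (x t * x' t + y t * y' t)
          + z' t * (x' t * x' t + x t * x'' t + y' t * y' t + y t * y'' t)) t := by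
      have := (hz' t).mul (((hx t).mul (hx' t)).add ((hy t).mul (hy' t)))
      refine this.congr_deriv ?_; simp only [Pi.add_apply, Pi.mul_apply, Pi.pow_apply]; ring
    have h3 : HasDerivAt (fun t => α * z t / Real.sqrt (x t ^ 2 + y t ^ 2 + z t ^ 2))
        ((α * z' t * R - α * z t *
          ((2 * x t * x' t + 2 * y t * y' t + 2 * z t * z' t) / (2 * R))) / R ^ 2) t := by
      have := ((hz t).const_mul α).div hsqrt hRpos.ne'
      exact this
    have h4 : HasDerivAt (fun t => 2 * b * z t / (x t ^ 2 + y t ^ 2))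
        ((2 * b * z' t * (x t ^ 2 + y t ^ 2)
          - 2 * b * z t * (2 * x t * x' t + 2 * y t * y' t)) / (x t ^ 2 + y t ^ 2) ^ 2) t := by
      have := ((hz t).const_mul (2 * b)).div hρ' hρne
      exact this
    rw [hKfun]
    have := ((h1.sub h2).sub h3).add h4
    refine (this.congr_deriv ?_)
    symm
    have hR3 : R ^ 3 = R * (x t ^ 2 + y t ^ 2 + z t ^ 2) := by
      rw [← hR2]; ring
    rw [heqx t, heqy t, heqz t, ← hR]
    have hcancel : R * R⁻¹ = 1 := mul_inv_cancel₀ hRpos.ne'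
    linear_combination (α * z' t / R ^ 3) * hR2 - (α * z' t * R / R ^ 2) * hcancel
  intro s t
  have hdiff : Differentiable ℝ K := fun t => (hderiv t).differentiableAt
  have : ∀ u, deriv K u = 0 := fun u => (hderiv u).deriv
  have := is_const_of_deriv_eq_zero hdiff this
  exact this s t
end

section
/- Elimination of a uniform magnetic field by passing to a rotating frame (Larmor): let U : ℝ³ → ℝ be differentiable and invariant under every rotation about the z-axis, and let ω ∈ ℝ. Suppose q = (x, y, z) : ℝ → ℝ³ is twice differentiable and satisfies q̈(t) = −∇U(q(t)) + 2ω·(q̇(t) × e₃) (Newton's equation with an axially symmetric potential and a Lorentz force from a uniform magnetic field along e₃, ω being the Larmor frequency). Define the rotated curve u(t) = (x(t)·cos(ωt) − y(t)·sin(ωt), x(t)·sin(ωt) + y(t)·cos(ωt), z(t)). Then u satisfies ü(t) = −∇U(u(t)) − ω²·(u₁(t), u₂(t), 0), i.e. u obeys the equations of motion for the magnetic-field-free effective potential U + (ω²/2)(x² + y²). -/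
/-!
Elimination of a uniform magnetic field along `e₃` by passing to a rotating
frame (Larmor).  `U` is a differentiable potential on ℝ³ invariant under every
rotation about the `z`-axis; `q` solves Newton's equation with the Lorentz
force `2ω (q̇ × e₃)`; then the rotated curve
`u(t) = (x cos ωt − y sin ωt, x sin ωt + y cos ωt, z)` solves the
magnetic-field-free equation `ü = −∇U(u) − ω² (u₁, u₂, 0)`.
-/

/-- rotation by angle `θ` about the `z`-axis of ℝ³. -/
noncomputable def rotZ (θ : ℝ) (v : EuclideanSpace ℝ (Fin 3)) :
    EuclideanSpace ℝ (Fin 3) :=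
  (WithLp.equiv 2 (Fin 3 → ℝ)).symm
    ![v 0 * Real.cos θ - v 1 * Real.sin θ,
      v 0 * Real.sin θ + v 1 * Real.cos θ,
      v 2]

/-- the cross product `a × e₃` on ℝ³, written out: `(a₂, −a₁, 0)`. -/
noncomputable def crossE3 (a : EuclideanSpace ℝ (Fin 3)) :
    EuclideanSpace ℝ (Fin 3) :=
  (WithLp.equiv 2 (Fin 3 → ℝ)).symm ![a 1, -(a 0), 0]

/-- horizontal (planar) part `(v₁, v₂, 0)` of a vector of ℝ³. -/
noncomputable def horiz (v : EuclideanSpace ℝ (Fin 3)) :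
    EuclideanSpace ℝ (Fin 3) :=
  (WithLp.equiv 2 (Fin 3 → ℝ)).symm ![v 0, v 1, 0]

open Real
local notation "E3" => EuclideanSpace ℝ (Fin 3)

noncomputable def rotLE (θ : ℝ) : E3 ≃ₗ[ℝ] E3 where
  toFun := rotZ θ
  invFun := rotZ (-θ)
  map_add' a b := by
    refine PiLp.ext fun i => ?_
    fin_cases i <;> simp [rotZ, PiLp.add_apply] <;> ring
  map_smul' c a := by
    refine PiLp.ext fun i => ?_
    fin_cases i <;> simp [rotZ, PiLp.smul_apply] <;> ring
  left_inv v := by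
    have h := Real.sin_sq_add_cos_sq θ
    refine PiLp.ext fun i => ?_
    fin_cases i
    · simp [rotZ]; linear_combination v 0 * h
    · simp [rotZ]; linear_combination v 1 * h
    · simp [rotZ]
  right_inv v := by
    have h := Real.sin_sq_add_cos_sq θ
    refine PiLp.ext fun i => ?_
    fin_cases i
    · simp [rotZ]; linear_combination v 0 * h
    · simp [rotZ]; linear_combination v 1 * h
    · simp [rotZ]

noncomputable def rotIso (θ : ℝ) : E3 ≃ₗᵢ[ℝ] E3 :=
  (rotLE θ).isometryOfInner (by
    intro x y
    have h := Real.sin_sq_add_cos_sq θ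
    simp [rotLE, rotZ, PiLp.inner_apply, Fin.sum_univ_three]
    linear_combination (x 0 * y 0 + x 1 * y 1) * h)

lemma inner_grad (f : E3 → ℝ) (x y : E3) :
    inner ℝ (gradient f x) y = fderiv ℝ f x y := by
  simp only [gradient]
  exact InnerProductSpace.toDual_symm_apply

lemma grad_rot (U : E3 → ℝ) (hU : Differentiable ℝ U)
    (hsym : ∀ (θ : ℝ) (v : E3), U (rotZ θ v) = U v) (θ : ℝ) (v : E3) :
    gradient U (rotZ θ v) = rotZ θ (gradient U v) := by
  set e := rotIso θ with he
  have hUe : (fun w => U (e w)) = U := funext fun w => hsym θ w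
  have hfd : fderiv ℝ U v =
      (fderiv ℝ U (e v)).comp (e.toContinuousLinearEquiv : E3 →L[ℝ] E3) := by
    conv_lhs => rw [← hUe]
    rw [show (fun w => U (e w)) = U ∘ e from rfl,
      fderiv_comp v (hU (e v)) e.toContinuousLinearEquiv.differentiableAt]
    congr 1
    exact e.toContinuousLinearEquiv.fderiv
  have key : gradient U (e v) = e (gradient U v) := by
    apply ext_inner_right ℝ
    intro w
    calc inner ℝ (gradient U (e v)) w = fderiv ℝ U (e v) w := inner_grad _ _ _
      _ = fderiv ℝ U (e v) (e (e.symm w)) := by rw [e.apply_symm_apply]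
      _ = fderiv ℝ U v (e.symm w) := by rw [hfd]; rfl
      _ = inner ℝ (gradient U v) (e.symm w) := (inner_grad _ _ _).symm
      _ = inner ℝ (e (gradient U v)) (e (e.symm w)) := (e.inner_map_map _ _).symm
      _ = inner ℝ (e (gradient U v)) w := by rw [e.apply_symm_apply]
  exact key

lemma hasDerivAt_euclid {f : ℝ → E3} {f' : E3} {t : ℝ}
    (h : ∀ i : Fin 3, HasDerivAt (fun s => f s i) (f' i) t) : HasDerivAt f f' t := by
  have h2 : HasDerivAt (fun s => (EuclideanSpace.equiv (Fin 3) ℝ) (f s))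
      (EuclideanSpace.equiv (Fin 3) ℝ f') t := hasDerivAt_pi.2 h
  have h3 := ((EuclideanSpace.equiv (Fin 3) ℝ).symm.toContinuousLinearMap).hasFDerivAt.comp_hasDerivAt t h2
  simpa [Function.comp_def] using h3

lemma hasDerivAt_proj {f : ℝ → E3} {f' : E3} {t : ℝ}
    (h : HasDerivAt f f' t) (i : Fin 3) : HasDerivAt (fun s => f s i) (f' i) t := by
  simpa [Function.comp_def] using (EuclideanSpace.proj i).hasFDerivAt.comp_hasDerivAt t h

theorem larmor_rotating_frame
    (U : EuclideanSpace ℝ (Fin 3) → ℝ) (hU : Differentiable ℝ U)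
    (hsym : ∀ (θ : ℝ) (v : EuclideanSpace ℝ (Fin 3)), U (rotZ θ v) = U v)
    (ω : ℝ)
    (q q' q'' : ℝ → EuclideanSpace ℝ (Fin 3))
    (hq : ∀ t, HasDerivAt q (q' t) t) (hq' : ∀ t, HasDerivAt q' (q'' t) t)
    (heq : ∀ t, q'' t = -gradient U (q t) + (2 * ω) • crossE3 (q' t))
    (u : ℝ → EuclideanSpace ℝ (Fin 3))
    (hu : ∀ t, u t = rotZ (ω * t) (q t)) :
    ∀ t, HasDerivAt (deriv u)
      (-gradient U (u t) - ω ^ 2 • horiz (u t)) t := by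
  have hq_i : ∀ (i : Fin 3) (r : ℝ), HasDerivAt (fun s => q s i) (q' r i) r :=
    fun i r => hasDerivAt_proj (hq r) i
  have hq'_i : ∀ (i : Fin 3) (r : ℝ), HasDerivAt (fun s => q' s i) (q'' r i) r :=
    fun i r => hasDerivAt_proj (hq' r) i
  have hcos : ∀ r : ℝ, HasDerivAt (fun s => Real.cos (ω * s)) (-Real.sin (ω * r) * ω) r := by
    intro r
    have := (Real.hasDerivAt_cos (ω * r)).comp r ((hasDerivAt_id r).const_mul ω)
    simpa [Function.comp_def] using this
  have hsin : ∀ r : ℝ, HasDerivAt (fun s => Real.sin (ω * s)) (Real.cos (ω * r) * ω) r := by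
    intro r
    have := (Real.hasDerivAt_sin (ω * r)).comp r ((hasDerivAt_id r).const_mul ω)
    simpa [Function.comp_def] using this
  have hu0 : ∀ s, u s 0 = q s 0 * Real.cos (ω * s) - q s 1 * Real.sin (ω * s) := by
    intro s; rw [hu]; simp [rotZ]
  have hu1 : ∀ s, u s 1 = q s 0 * Real.sin (ω * s) + q s 1 * Real.cos (ω * s) := by
    intro s; rw [hu]; simp [rotZ]
  have hu2 : ∀ s, u s 2 = q s 2 := by intro s; rw [hu]; simp [rotZ]
  have hud : ∀ r, HasDerivAt u ((WithLp.equiv 2 (Fin 3 → ℝ)).symm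
      ![q' r 0 * Real.cos (ω * r) - q r 0 * Real.sin (ω * r) * ω -
          (q' r 1 * Real.sin (ω * r) + q r 1 * Real.cos (ω * r) * ω),
        q' r 0 * Real.sin (ω * r) + q r 0 * Real.cos (ω * r) * ω +
          (q' r 1 * Real.cos (ω * r) - q r 1 * Real.sin (ω * r) * ω),
        q' r 2]) r := by
    intro r
    apply hasDerivAt_euclid
    intro i
    fin_cases i
    · show HasDerivAt (fun s => u s 0)
        (q' r 0 * Real.cos (ω * r) - q r 0 * Real.sin (ω * r) * ω -
          (q' r 1 * Real.sin (ω * r) + q r 1 * Real.cos (ω * r) * ω)) r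
      rw [show (fun s => u s 0) =
        (fun s => q s 0 * Real.cos (ω * s) - q s 1 * Real.sin (ω * s)) from
        funext fun s => hu0 s]
      have h := ((hq_i 0 r).mul (hcos r)).sub ((hq_i 1 r).mul (hsin r))
      exact h.congr_deriv (by ring)
    · show HasDerivAt (fun s => u s 1)
        (q' r 0 * Real.sin (ω * r) + q r 0 * Real.cos (ω * r) * ω +
          (q' r 1 * Real.cos (ω * r) - q r 1 * Real.sin (ω * r) * ω)) r
      rw [show (fun s => u s 1) =
        (fun s => q s 0 * Real.sin (ω * s) + q s 1 * Real.cos (ω * s)) from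
        funext fun s => hu1 s]
      have h := ((hq_i 0 r).mul (hsin r)).add ((hq_i 1 r).mul (hcos r))
      exact h.congr_deriv (by ring)
    · show HasDerivAt (fun s => u s 2) (q' r 2) r
      rw [show (fun s => u s 2) = (fun s => q s 2) from funext fun s => hu2 s]
      exact hq_i 2 r
  have hderiv_eq : deriv u = fun r => (WithLp.equiv 2 (Fin 3 → ℝ)).symm
      ![q' r 0 * Real.cos (ω * r) - q r 0 * Real.sin (ω * r) * ω -
          (q' r 1 * Real.sin (ω * r) + q r 1 * Real.cos (ω * r) * ω),
        q' r 0 * Real.sin (ω * r) + q r 0 * Real.cos (ω * r) * ω +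
          (q' r 1 * Real.cos (ω * r) - q r 1 * Real.sin (ω * r) * ω),
        q' r 2] := funext fun r => (hud r).deriv
  intro t
  have hg : gradient U (u t) = rotZ (ω * t) (gradient U (q t)) := by
    rw [hu t]; exact grad_rot U hU hsym _ _
  have hg0 : gradient U (u t) 0 =
      gradient U (q t) 0 * Real.cos (ω * t) - gradient U (q t) 1 * Real.sin (ω * t) := by
    rw [hg]; simp [rotZ]
  have hg1 : gradient U (u t) 1 =
      gradient U (q t) 0 * Real.sin (ω * t) + gradient U (q t) 1 * Real.cos (ω * t) := by
    rw [hg]; simp [rotZ]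
  have hg2 : gradient U (u t) 2 = gradient U (q t) 2 := by rw [hg]; simp [rotZ]
  have h0 : q'' t 0 = -(gradient U (q t) 0) + (2 * ω) * q' t 1 := by
    rw [heq t]
    simp [crossE3, PiLp.add_apply, PiLp.smul_apply, PiLp.neg_apply]
  have h1 : q'' t 1 = -(gradient U (q t) 1) - (2 * ω) * q' t 0 := by
    rw [heq t]
    simp [crossE3, PiLp.add_apply, PiLp.smul_apply, PiLp.neg_apply]
    ring
  have h2 : q'' t 2 = -(gradient U (q t) 2) := by
    rw [heq t]
    simp [crossE3, PiLp.add_apply, PiLp.smul_apply, PiLp.neg_apply]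
  rw [hderiv_eq]
  apply hasDerivAt_euclid
  intro i
  fin_cases i
  · show HasDerivAt (fun s => q' s 0 * Real.cos (ω * s) - q s 0 * Real.sin (ω * s) * ω -
          (q' s 1 * Real.sin (ω * s) + q s 1 * Real.cos (ω * s) * ω))
        (-(gradient U (u t) 0) - ω ^ 2 * (u t 0)) t
    have h := (((hq'_i 0 t).mul (hcos t)).sub (((hq_i 0 t).mul (hsin t)).mul_const ω)).sub
      ((((hq'_i 1 t).mul (hsin t))).add (((hq_i 1 t).mul (hcos t)).mul_const ω))
    refine h.congr_deriv ?_
    rw [hg0, hu0 t, h0, h1]; ring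
  · show HasDerivAt (fun s => q' s 0 * Real.sin (ω * s) + q s 0 * Real.cos (ω * s) * ω +
          (q' s 1 * Real.cos (ω * s) - q s 1 * Real.sin (ω * s) * ω))
        (-(gradient U (u t) 1) - ω ^ 2 * (u t 1)) t
    have h := (((hq'_i 0 t).mul (hsin t)).add (((hq_i 0 t).mul (hcos t)).mul_const ω)).add
      ((((hq'_i 1 t).mul (hcos t))).sub (((hq_i 1 t).mul (hsin t)).mul_const ω))
    refine h.congr_deriv ?_
    rw [hg1, hu1 t, h0, h1]; ring
  · show HasDerivAt (fun s => q' s 2) (-(gradient U (u t) 2) - ω ^ 2 * 0) t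
    have h := hq'_i 2 t
    convert h using 1
    rw [hg2, h2]; ring
end

section
/- Axial symmetry of the first tower of parabolic-separable potentials: for every natural number n there exists a real polynomial P_n in two variables such that for all ξ, η ∈ ℝ, ξ^{2n} + (−1)^{n+1}·η^{2n} = (ξ² + η²)·P_n((ξ² − η²)/2, ξ²η²). Consequently the potential V_n = a·(ξ^{2n} + (−1)^{n+1}η^{2n})/(ξ² + η²) is a polynomial function of z = (ξ² − η²)/2 and ρ² = ξ²η² alone, hence an axially symmetric potential on ℝ³. -/
/-!
Axial symmetry of the first tower of parabolic-separable potentials: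
for every `n : ℕ` there is a real polynomial `P` in the two variables
`z = (ξ² − η²)/2` and `ρ² = ξ²η²` such that
`ξ^{2n} + (−1)^{n+1} η^{2n} = (ξ² + η²) · P(z, ρ²)`.
Consequently `V_n = a (ξ^{2n} + (−1)^{n+1} η^{2n})/(ξ² + η²)` is a polynomial
function of `z` and `ρ²` alone, hence an axially symmetric potential on ℝ³.
-/

private lemma first_tower_aux (n : ℕ) :
    ∃ P : MvPolynomial (Fin 2) ℝ, ∀ ξ η : ℝ,
      ξ ^ (2 * n) + (-1 : ℝ) ^ (n + 1) * η ^ (2 * n)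
        = (ξ ^ 2 + η ^ 2) *
            MvPolynomial.eval ![(ξ ^ 2 - η ^ 2) / 2, ξ ^ 2 * η ^ 2] P := by
  induction n using Nat.twoStepInduction with
  | zero =>
      exact ⟨0, fun ξ η => by simp⟩
  | one =>
      exact ⟨1, fun ξ η => by norm_num⟩
  | more n ih1 ih2 =>
      obtain ⟨P, hP⟩ := ih1
      obtain ⟨Q, hQ⟩ := ih2
      refine ⟨2 * MvPolynomial.X 0 * Q + MvPolynomial.X 1 * P, fun ξ η => ?_⟩
      have h1 := hP ξ η
      have h2 := hQ ξ η
      have key : ξ ^ (2 * (n + 2)) + (-1 : ℝ) ^ (n + 2 + 1) * η ^ (2 * (n + 2))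
          = (ξ ^ 2 - η ^ 2) * (ξ ^ (2 * (n + 1)) + (-1 : ℝ) ^ (n + 1 + 1) * η ^ (2 * (n + 1)))
            + ξ ^ 2 * η ^ 2 * (ξ ^ (2 * n) + (-1 : ℝ) ^ (n + 1) * η ^ (2 * n)) := by
        simp only [pow_succ, Nat.mul_add]
        ring
      rw [key, h1, h2]
      simp [MvPolynomial.eval_mul, MvPolynomial.eval_add]
      ring

theorem first_tower_axially_symmetric (n : ℕ) :
    ∃ P : MvPolynomial (Fin 2) ℝ,
      (∀ ξ η : ℝ,
        ξ ^ (2 * n) + (-1 : ℝ) ^ (n + 1) * η ^ (2 * n)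
          = (ξ ^ 2 + η ^ 2) *
              MvPolynomial.eval ![(ξ ^ 2 - η ^ 2) / 2, ξ ^ 2 * η ^ 2] P) ∧
      (∀ a ξ η : ℝ, ξ ^ 2 + η ^ 2 ≠ 0 →
        a * (ξ ^ (2 * n) + (-1 : ℝ) ^ (n + 1) * η ^ (2 * n)) / (ξ ^ 2 + η ^ 2)
          = a * MvPolynomial.eval ![(ξ ^ 2 - η ^ 2) / 2, ξ ^ 2 * η ^ 2] P) := by
  obtain ⟨P, hP⟩ := first_tower_aux n
  refine ⟨P, hP, fun a ξ η h => ?_⟩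
  rw [hP ξ η]
  field_simp
end

section
/- Axial symmetry of the second tower of parabolic-separable potentials: for every natural number n there exists a real polynomial Q_n in two variables such that for all ξ, η ∈ ℝ, ξ^{2n} + (−1)^{n}·η^{2n} = Q_n((ξ² − η²)/2, ξ²η²). Consequently the potential Ṽ_n = a·(ξ^{2n} + (−1)^{n}η^{2n})/(ξ² + η²) equals a polynomial in z = (ξ² − η²)/2 and ρ² = ξ²η², divided by 2r = ξ² + η², hence is an axially symmetric potential on ℝ³. (For example, n = 0 gives the Coulomb potential ∝ 1/r and n = 1 gives ∝ z/r.) -/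
/-!
Axial symmetry of the second tower of parabolic-separable potentials:
for every `n : ℕ` there is a real polynomial `Q` in the two variables
`z = (ξ² − η²)/2` and `ρ² = ξ²η²` such that
`ξ^{2n} + (−1)^{n} η^{2n} = Q(z, ρ²)`.
Consequently `Ṽ_n = a (ξ^{2n} + (−1)^{n} η^{2n})/(ξ² + η²)` equals a
polynomial in `z` and `ρ²` divided by `2r = ξ² + η²`, hence an axially
symmetric potential on ℝ³ (e.g. `n = 0` gives the Coulomb potential `∝ 1/r`
and `n = 1` gives `∝ z/r`).
-/

private noncomputable def towerQ : ℕ → MvPolynomial (Fin 2) ℝ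
  | 0 => 2
  | 1 => 2 * MvPolynomial.X 0
  | (n + 2) => 2 * MvPolynomial.X 0 * towerQ (n + 1) + MvPolynomial.X 1 * towerQ n

private lemma towerQ_eval (n : ℕ) (ξ η : ℝ) :
    (ξ ^ 2) ^ n + (-(η ^ 2)) ^ n
      = MvPolynomial.eval ![(ξ ^ 2 - η ^ 2) / 2, ξ ^ 2 * η ^ 2] (towerQ n) := by
  induction n using Nat.strong_induction_on with
  | _ n ih =>
    match n with
    | 0 => simp [towerQ]; norm_num
    | 1 =>
      simp only [towerQ, map_mul, map_ofNat, MvPolynomial.eval_X, pow_one]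
      simp
      ring
    | (m + 2) =>
      have h1 := ih (m + 1) (by omega)
      have h0 := ih m (by omega)
      simp only [towerQ, map_add, map_mul, map_ofNat, MvPolynomial.eval_X, ← h1, ← h0]
      have : (![(ξ ^ 2 - η ^ 2) / 2, ξ ^ 2 * η ^ 2] : Fin 2 → ℝ) 0 = (ξ ^ 2 - η ^ 2) / 2 := rfl
      have h2 : (![(ξ ^ 2 - η ^ 2) / 2, ξ ^ 2 * η ^ 2] : Fin 2 → ℝ) 1 = ξ ^ 2 * η ^ 2 := rfl
      rw [this, h2]
      ring

theorem second_tower_axially_symmetric (n : ℕ) :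
    ∃ Q : MvPolynomial (Fin 2) ℝ,
      (∀ ξ η : ℝ,
        ξ ^ (2 * n) + (-1 : ℝ) ^ n * η ^ (2 * n)
          = MvPolynomial.eval ![(ξ ^ 2 - η ^ 2) / 2, ξ ^ 2 * η ^ 2] Q) ∧
      (∀ a ξ η : ℝ, ξ ^ 2 + η ^ 2 ≠ 0 →
        a * (ξ ^ (2 * n) + (-1 : ℝ) ^ n * η ^ (2 * n)) / (ξ ^ 2 + η ^ 2)
          = a * MvPolynomial.eval ![(ξ ^ 2 - η ^ 2) / 2, ξ ^ 2 * η ^ 2] Q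
              / (ξ ^ 2 + η ^ 2)) := by
  refine ⟨towerQ n, ?_, ?_⟩
  · intro ξ η
    have := towerQ_eval n ξ η
    rw [← this, mul_comm 2 n, pow_mul, pow_mul, neg_pow, mul_comm ((-1:ℝ)^n)]
    ring
  · intro a ξ η _
    have := towerQ_eval n ξ η
    rw [← this, mul_comm 2 n, pow_mul, pow_mul, neg_pow]
    ring_nf
end
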